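/- Let A be a genotype matrix and B a haplotype matrix explaining A that satisfies the three gamete property. Let g be a row of A and i, j, k columns with g[i] = g[j] = g[k] = 2, 11 ∈ ind^A(i,j) and {01,10} ⊆ ind^A(j,k). Then the two rows h, h' of B explaining g satisfy h[i] = h'[k] ≠ h'[i] = h[k]; in particular h[i] ≠ h[k]. -/

import Mathlib

/-!
At the heterozygous columns of `g` the two explaining haplotypes are complementary, so on
columns `i, j` they induce either `{01, 10}` (if they split `i` from `j`) or `{00, 11}`.
Since `11 ∈ ind(i,j)`, the first option would complete the forbidden triple, so `h[i] = h[j]`;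
since `{01, 10} ⊆ ind(j,k)`, the second option is excluded on `j, k`, so `h[j] ≠ h[k]`.
Both arguments need `ind^A ⊆ ind^B`, which holds because a `2`-entry is resolved to both values.
-/

/-- A pair of haplotypes `h`, `h'` explains a genotype `g`:
entries `0`/`1` are copied, and at `2`-entries the haplotypes differ. -/
def ExplainsRow {m : ℕ} (h h' : Fin m → Bool) (g : Fin m → Fin 3) : Prop :=
  ∀ j : Fin m,
    (g j = 0 → h j = false ∧ h' j = false) ∧
    (g j = 1 → h j = true ∧ h' j = true) ∧
    (g j = 2 → h j ≠ h' j)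

/-- A `2n × m` haplotype matrix, given by its odd rows `B₁` and even rows `B₂`,
explains an `n × m` genotype matrix `A`. -/
def Explains {n m : ℕ} (B₁ B₂ : Fin n → Fin m → Bool) (A : Fin n → Fin m → Fin 3) : Prop :=
  ∀ r : Fin n, ExplainsRow (B₁ r) (B₂ r) (A r)

/-- The induced set `ind^B(i,j)` of a haplotype matrix: all pairs `xy` appearing
in columns `i` and `j` in some row of `B`. -/
def indB {n m : ℕ} (B₁ B₂ : Fin n → Fin m → Bool) (i j : Fin m) : Set (Bool × Bool) :=
  {p | ∃ r : Fin n, (B₁ r i = p.1 ∧ B₁ r j = p.2) ∨ (B₂ r i = p.1 ∧ B₂ r j = p.2)}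

/-- The three gamete property: `{01,10,11}` is never a subset of an induced set. -/
def ThreeGamete {n m : ℕ} (B₁ B₂ : Fin n → Fin m → Bool) : Prop :=
  ∀ i j : Fin m,
    ¬ (({(false, true), (true, false), (true, true)} : Set (Bool × Bool)) ⊆ indB B₁ B₂ i j)

/-- The four gamete property: no induced set equals `{00,01,10,11}`. -/
def FourGamete {n m : ℕ} (B₁ B₂ : Fin n → Fin m → Bool) : Prop :=
  ∀ i j : Fin m,
    indB B₁ B₂ i j ≠
      ({(false, false), (false, true), (true, false), (true, true)} : Set (Bool × Bool))

/-- A genotype matrix admits a directed perfect phylogeny if some explaining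
haplotype matrix satisfies the three gamete property. -/
def AdmitsDirectedPP {n m : ℕ} (A : Fin n → Fin m → Fin 3) : Prop :=
  ∃ B₁ B₂ : Fin n → Fin m → Bool, Explains B₁ B₂ A ∧ ThreeGamete B₁ B₂

/-- A genotype matrix admits a perfect phylogeny if some explaining
haplotype matrix satisfies the four gamete property. -/
def AdmitsPP {n m : ℕ} (A : Fin n → Fin m → Fin 3) : Prop :=
  ∃ B₁ B₂ : Fin n → Fin m → Bool, Explains B₁ B₂ A ∧ FourGamete B₁ B₂

/-- Encode a haplotype entry as a genotype entry. -/
def boolToFin3 (b : Bool) : Fin 3 := if b then 1 else 0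

/-- The induced set `ind^A(i,j)` of a genotype matrix. -/
def indA {n m : ℕ} (A : Fin n → Fin m → Fin 3) (i j : Fin m) : Set (Bool × Bool) :=
  {p | ∃ r : Fin n,
    (A r i = boolToFin3 p.1 ∧ A r j = boolToFin3 p.2) ∨
    (A r i = boolToFin3 p.1 ∧ A r j = 2) ∨
    (A r i = 2 ∧ A r j = boolToFin3 p.2)}

lemma ExplainsRow.eq_of_eq_boolToFin3 {m : ℕ} {h h' : Fin m → Bool} {g : Fin m → Fin 3}
    (he : ExplainsRow h h' g) {i : Fin m} {b : Bool} (hb : g i = boolToFin3 b) :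
    h i = b ∧ h' i = b := by
  cases b with
  | false => exact (he i).1 hb
  | true => exact (he i).2.1 hb

lemma ExplainsRow.eq_not_of_eq_two {m : ℕ} {h h' : Fin m → Bool} {g : Fin m → Fin 3}
    (he : ExplainsRow h h' g) {i : Fin m} (hi : g i = 2) : h' i = !h i :=
  Bool.eq_not_of_ne ((he i).2.2 hi).symm

lemma ExplainsRow.exists_eq_of_eq_two {m : ℕ} {h h' : Fin m → Bool} {g : Fin m → Fin 3}
    (he : ExplainsRow h h' g) {i : Fin m} (hi : g i = 2) (b : Bool) :
    h i = b ∨ h' i = b := by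
  rw [he.eq_not_of_eq_two hi]
  cases h i <;> cases b <;> simp

lemma indA_subset_indB {n m : ℕ} {A : Fin n → Fin m → Fin 3} {B₁ B₂ : Fin n → Fin m → Bool}
    (hexp : Explains B₁ B₂ A) (i j : Fin m) : indA A i j ⊆ indB B₁ B₂ i j := by
  rintro ⟨b, c⟩ ⟨s, ⟨hb, hc⟩ | ⟨hb, hc⟩ | ⟨hb, hc⟩⟩
  · exact ⟨s, .inl ⟨((hexp s).eq_of_eq_boolToFin3 hb).1, ((hexp s).eq_of_eq_boolToFin3 hc).1⟩⟩
  · obtain ⟨hb₁, hb₂⟩ := (hexp s).eq_of_eq_boolToFin3 hb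
    rcases (hexp s).exists_eq_of_eq_two hc c with hc₁ | hc₂
    · exact ⟨s, .inl ⟨hb₁, hc₁⟩⟩
    · exact ⟨s, .inr ⟨hb₂, hc₂⟩⟩
  · obtain ⟨hc₁, hc₂⟩ := (hexp s).eq_of_eq_boolToFin3 hc
    rcases (hexp s).exists_eq_of_eq_two hb b with hb₁ | hb₂
    · exact ⟨s, .inl ⟨hb₁, hc₁⟩⟩
    · exact ⟨s, .inr ⟨hb₂, hc₂⟩⟩

namespace ThreeGamete

variable {n m : ℕ} {B₁ B₂ : Fin n → Fin m → Bool}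

lemma eq_of_true_true_mem (h3 : ThreeGamete B₁ B₂) {s : Fin n} {i j : Fin m}
    (hi : B₂ s i = !B₁ s i) (hj : B₂ s j = !B₁ s j)
    (h11 : ((true, true) : Bool × Bool) ∈ indB B₁ B₂ i j) : B₁ s i = B₁ s j := by
  by_contra hne
  have h₁ : ((B₁ s i, B₁ s j) : Bool × Bool) ∈ indB B₁ B₂ i j := ⟨s, .inl ⟨rfl, rfl⟩⟩
  have h₂ : ((B₂ s i, B₂ s j) : Bool × Bool) ∈ indB B₁ B₂ i j := ⟨s, .inr ⟨rfl, rfl⟩⟩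
  rw [hi, hj, Bool.eq_not_of_ne (Ne.symm hne), Bool.not_not] at h₂
  rw [Bool.eq_not_of_ne (Ne.symm hne)] at h₁
  apply h3 i j
  simp only [Set.insert_subset_iff, Set.singleton_subset_iff]
  cases hb : B₁ s i
  · simp only [hb, Bool.not_false] at h₁ h₂
    exact ⟨h₁, h₂, h11⟩
  · simp only [hb, Bool.not_true] at h₁ h₂
    exact ⟨h₂, h₁, h11⟩

lemma ne_of_false_true_mem_of_true_false_mem (h3 : ThreeGamete B₁ B₂) {s : Fin n} {j k : Fin m}
    (hj : B₂ s j = !B₁ s j) (hk : B₂ s k = !B₁ s k)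
    (h01 : ((false, true) : Bool × Bool) ∈ indB B₁ B₂ j k)
    (h10 : ((true, false) : Bool × Bool) ∈ indB B₁ B₂ j k) : B₁ s j ≠ B₁ s k := by
  intro heq
  have h₁ : ((B₁ s j, B₁ s k) : Bool × Bool) ∈ indB B₁ B₂ j k := ⟨s, .inl ⟨rfl, rfl⟩⟩
  have h₂ : ((B₂ s j, B₂ s k) : Bool × Bool) ∈ indB B₁ B₂ j k := ⟨s, .inr ⟨rfl, rfl⟩⟩
  rw [hj, hk, heq] at h₂
  rw [heq] at h₁
  apply h3 j k
  simp only [Set.insert_subset_iff, Set.singleton_subset_iff]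
  refine ⟨h01, h10, ?_⟩
  cases hb : B₁ s k
  · simpa [hb] using h₂
  · simpa [hb] using h₁

end ThreeGamete

/-- Let `B` be a haplotype matrix explaining `A` that satisfies the three gamete
property, and let `g` (row `r` of `A`) and columns `i, j, k` satisfy
`g[i] = g[j] = g[k] = 2`, `11 ∈ ind^A(i,j)` and `{01,10} ⊆ ind^A(j,k)`. Then the
explaining haplotypes `h = B₁ r`, `h' = B₂ r` of `g` satisfy
`h[i] = h'[k] ≠ h'[i] = h[k]`; in particular `h[i] ≠ h[k]`. -/
theorem resolution_propagation {n m : ℕ} (A : Fin n → Fin m → Fin 3)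
    (B₁ B₂ : Fin n → Fin m → Bool) (hexp : Explains B₁ B₂ A) (h3 : ThreeGamete B₁ B₂)
    (r : Fin n) (i j k : Fin m)
    (hi : A r i = 2) (hj : A r j = 2) (hk : A r k = 2)
    (h11 : ((true, true) : Bool × Bool) ∈ indA A i j)
    (h0110 : ({(false, true), (true, false)} : Set (Bool × Bool)) ⊆ indA A j k) :
    B₁ r i = B₂ r k ∧ B₂ r k ≠ B₂ r i ∧ B₂ r i = B₁ r k ∧ B₁ r i ≠ B₁ r k := by
  have hi' := (hexp r).eq_not_of_eq_two hi
  have hj' := (hexp r).eq_not_of_eq_two hj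
  have hk' := (hexp r).eq_not_of_eq_two hk
  have hij : B₁ r i = B₁ r j :=
    h3.eq_of_true_true_mem hi' hj' (indA_subset_indB hexp i j h11)
  have hjk : B₁ r j ≠ B₁ r k :=
    h3.ne_of_false_true_mem_of_true_false_mem hj' hk'
      (indA_subset_indB hexp j k (h0110 (by simp))) (indA_subset_indB hexp j k (h0110 (by simp)))
  rw [hi', hk', Bool.eq_not_of_ne hjk.symm, hij]
  simp
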